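/- arXiv:0909.0795 — 4 statements merged into one kernel-verified Lean document; each statement's English description precedes it below -/
import Mathlib

section
/- Let N be a positive integer and χ: ℤ → ℂ a function of period N with ∑_{k=1}^{N} χ(k) = 0. Then the Cesàro limit of the partial sums of ∑ χ(i) exists and equals -(1/N) ∑_{k=1}^{N} k·χ(k); that is, lim_{l→∞} (1/l) ∑_{k=1}^{l} (l+1-k)·χ(k) = -(1/N) ∑_{k=1}^{N} k·χ(k). -/
/-!
Because the sum of `χ` over a period vanishes, the partial sums `S j = ∑_{k ≤ j} χ k` are again
`N`-periodic, and `∑_{k ≤ l} (l + 1 - k) χ k = ∑_{j ≤ l} S j`. The Cesàro mean of a periodic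
sequence tends to its average over one period, and `(1/N) ∑_{j ≤ N} S j` equals
`(1/N) ∑_{k ≤ N} (N + 1 - k) χ k = -(1/N) ∑_{k ≤ N} k χ k`.
-/

open Filter Finset

namespace Function.Periodic

variable {N : ℕ}

theorem sum_range_add_eq {M : Type*} [AddCommMonoid M] {f : ℕ → M} (hf : Periodic f N) (m : ℕ) :
    ∑ i ∈ range N, f (m + i) = ∑ i ∈ range N, f i := by
  calc ∑ i ∈ range N, f (m + i) = ∑ i ∈ Ico m (m + N), f (i % N) := by
        rw [sum_Ico_eq_sum_range, Nat.add_sub_cancel_left]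
        simp only [hf.map_mod_nat]
    _ = (((Multiset.Ico m (m + N)).map (· % N)).map f).sum := by
        rw [Multiset.map_map]; rfl
    _ = ∑ i ∈ range N, f i := by rw [Nat.multiset_Ico_map_mod]; rfl

theorem periodic_sum_range {M : Type*} [AddCommMonoid M] {f : ℕ → M} (hf : Periodic f N)
    (hsum : ∑ i ∈ range N, f i = 0) : Periodic (fun n => ∑ i ∈ range n, f i) N := fun n => by
  simp only [sum_range_add, hf.sum_range_add_eq, hsum, add_zero]

theorem finite_range {α : Type*} {f : ℕ → α} (hf : Periodic f N) (hN : 0 < N) :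
    (Set.range f).Finite := by
  refine ((Set.finite_Iio N).image f).subset ?_
  rintro _ ⟨n, rfl⟩
  exact ⟨n % N, Nat.mod_lt n hN, hf.map_mod_nat n⟩

theorem tendsto_cesaro_smul {E : Type*} [NormedAddCommGroup E] [NormedSpace ℝ E] {a : ℕ → E}
    (ha : Periodic a N) (hN : 0 < N) :
    Tendsto (fun n : ℕ => (n⁻¹ : ℝ) • ∑ i ∈ range n, a i) atTop
      (nhds ((N⁻¹ : ℝ) • ∑ i ∈ range N, a i)) := by
  -- `a - c` has vanishing period sum, so its partial sums are periodic, hence bounded.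
  set c := (N⁻¹ : ℝ) • ∑ i ∈ range N, a i
  have hb : Periodic (fun i => a i - c) N := fun i => by simp only [ha i]
  have hbsum : ∑ i ∈ range N, (a i - c) = 0 := by
    rw [sum_sub_distrib, sum_const, card_range, ← Nat.cast_smul_eq_nsmul ℝ, smul_smul,
      mul_inv_cancel₀ (Nat.cast_ne_zero.2 hN.ne'), one_smul, sub_self]
  have hB : IsBoundedUnder (· ≤ ·) atTop (norm ∘ fun n => ∑ i ∈ range n, (a i - c)) :=
    have ⟨C, hC⟩ := isBounded_iff_forall_norm_le.1
      ((hb.periodic_sum_range hbsum).finite_range hN).isBounded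
    isBoundedUnder_of ⟨C, fun n => hC _ ⟨n, rfl⟩⟩
  have hmean : ∀ n : ℕ, n ≠ 0 →
      (n⁻¹ : ℝ) • ∑ i ∈ range n, a i = c + (n⁻¹ : ℝ) • ∑ i ∈ range n, (a i - c) := fun n hn => by
    rw [sum_sub_distrib, sum_const, card_range, ← Nat.cast_smul_eq_nsmul ℝ, smul_sub, smul_smul,
      inv_mul_cancel₀ (Nat.cast_ne_zero.2 hn), one_smul, add_sub_cancel]
  have hlim := tendsto_const_nhds (x := c).add
    ((tendsto_inv_atTop_nhds_zero_nat (𝕜 := ℝ)).zero_smul_isBoundedUnder_le hB)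
  rw [add_zero] at hlim
  exact hlim.congr' <| (eventually_ne_atTop 0).mono fun n hn => (hmean n hn).symm

end Function.Periodic

theorem Finset.sum_range_sum_range_succ {M : Type*} [AddCommMonoid M] (u : ℕ → M) (n : ℕ) :
    ∑ j ∈ range n, ∑ k ∈ range (j + 1), u k = ∑ k ∈ range n, (n - k) • u k := by
  have := sum_Ico_Ico_comm 0 n fun i _ => u i
  simp only [sum_const, Nat.card_Ico, ← range_eq_Ico] at this
  exact this.symm

/-- Cesàro limit of partial sums of a periodic series with vanishing period sum. -/
theorem cesaro_limit_periodic_sum (N : ℕ) (hN : 0 < N) (χ : ℤ → ℂ)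
    (hper : ∀ j : ℤ, χ (j + N) = χ j)
    (hsum : ∑ k ∈ Finset.range N, χ (k + 1) = 0) :
    Tendsto (fun l : ℕ => (1 / (l : ℂ)) *
        ∑ k ∈ Finset.range l, ((l : ℂ) + 1 - ((k : ℂ) + 1)) * χ (k + 1))
      atTop
      (nhds (-(1 / (N : ℂ)) * ∑ k ∈ Finset.range N, ((k : ℂ) + 1) * χ (k + 1))) := by
  set a : ℕ → ℂ := fun k => χ (k + 1)
  have ha : Function.Periodic a N := fun k => by
    simpa only [a, Nat.cast_add, add_right_comm] using hper (k + 1)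
  have hS : Function.Periodic (fun j => ∑ k ∈ range (j + 1), a k) N :=
    (ha.periodic_sum_range hsum).add_const 1
  have hmean : ∀ n : ℕ, (n⁻¹ : ℝ) • ∑ j ∈ range n, ∑ k ∈ range (j + 1), a k =
      1 / (n : ℂ) * ∑ k ∈ range n, ((n : ℂ) + 1 - ((k : ℂ) + 1)) * a k := fun n => by
    rw [sum_range_sum_range_succ, Complex.real_smul, one_div, Complex.ofReal_inv,
      Complex.ofReal_natCast]
    congr 1
    refine sum_congr rfl fun k hk => ?_
    rw [nsmul_eq_mul, Nat.cast_sub (mem_range.1 hk).le]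
    ring
  have hlimit : ∑ k ∈ range N, ((N : ℂ) + 1 - ((k : ℂ) + 1)) * a k =
      -∑ k ∈ range N, ((k : ℂ) + 1) * a k := by
    simp only [sub_mul, sum_sub_distrib, ← mul_sum, a, hsum, mul_zero, zero_sub]
  have hcesaro := hS.tendsto_cesaro_smul hN
  simp only [hmean, hlimit] at hcesaro
  simpa only [neg_mul, mul_neg] using hcesaro
end

section
/- Let χ: ℤ → ℂ have period N and satisfy χ(j)=χ(-j). Define L(-1,χ) and L(0,χ) via the Bernoulli-polynomial formulas. Then for m = Nk a positive multiple of N: -(1/2)∑_{j=-1}^{-m} χ(j)·j·(m+j) = m·L(-1,χ) + (m³/(12N))·∑_{k=1}^{N} χ(k). -/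
open Finset

private lemma sum_range_mul_blocks (f : ℕ → ℂ) (N : ℕ) :
    ∀ k : ℕ, ∑ j ∈ Finset.range (N * k), f j
      = ∑ q ∈ Finset.range k, ∑ r ∈ Finset.range N, f (N * q + r) := by
  intro k
  induction k with
  | zero => simp
  | succ k ih =>
      have h : N * (k + 1) = N * k + N := by ring
      rw [h, Finset.sum_range_add, ih, Finset.sum_range_succ]

private lemma per_mul (χ : ℤ → ℂ) (N : ℕ) (hper : ∀ j : ℤ, χ (j + N) = χ j) :
    ∀ (q : ℕ) (x : ℤ), χ (x + N * q) = χ x := by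
  intro q
  induction q with
  | zero => simp
  | succ q ih =>
      intro x
      have h2 : x + (N : ℤ) * ((q : ℕ) + 1 : ℕ) = (x + N * q) + N := by push_cast; ring
      rw [h2, hper, ih]

private lemma sum_quad (a b c : ℂ) : ∀ k : ℕ,
    ∑ q ∈ Finset.range k, (a + b * q + c * (q : ℂ) ^ 2)
      = (k : ℂ) * a + b * ((k : ℂ) * ((k : ℂ) - 1) / 2)
        + c * ((k : ℂ) * ((k : ℂ) - 1) * (2 * (k : ℂ) - 1) / 6) := by
  intro k
  induction k with
  | zero => simp
  | succ k ih =>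
      rw [Finset.sum_range_succ, ih]
      push_cast
      ring

/-- Equation (2.4): for an even periodic `χ` and `m = N·k`,
`(1/2)∑_{j=1}^{m} χ(j)·j·(m-j) = m·L(-1,χ) + (m³/(12N))·∑_{a=1}^{N} χ(a)`,
where `L(-1,χ)` is given by the Bernoulli-polynomial formula. -/
theorem half_sum_eq_L_value (N : ℕ) (hN : 0 < N) (χ : ℤ → ℂ)
    (hper : ∀ j : ℤ, χ (j + N) = χ j) (heven : ∀ j : ℤ, χ j = χ (-j))
    (k : ℕ) (hk : 0 < k) :
    (1 / 2) * ∑ j ∈ Finset.range (N * k),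
        χ (j + 1) * ((j : ℂ) + 1) * (((N * k : ℕ) : ℂ) - ((j : ℂ) + 1))
      = ((N * k : ℕ) : ℂ) *
          (-(1 / (2 * (N : ℂ))) * ∑ a ∈ Finset.range N, ((a : ℂ) + 1) ^ 2 * χ (a + 1)
            + (1 / 2) * ∑ a ∈ Finset.range N, ((a : ℂ) + 1) * χ (a + 1)
            - ((N : ℂ) / 12) * ∑ a ∈ Finset.range N, χ (a + 1))
        + (((N * k : ℕ) : ℂ) ^ 3 / (12 * N)) * ∑ a ∈ Finset.range N, χ (a + 1) := by
  have hNC : (N : ℂ) ≠ 0 := Nat.cast_ne_zero.mpr hN.ne'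
  -- Step 1: block decomposition and periodicity
  have key : ∑ j ∈ Finset.range (N * k),
        χ (j + 1) * ((j : ℂ) + 1) * (((N * k : ℕ) : ℂ) - ((j : ℂ) + 1))
      = ∑ r ∈ Finset.range N, χ (r + 1) *
          (-(k : ℂ) * ((r : ℂ) + 1) ^ 2 + (N : ℂ) * k * ((r : ℂ) + 1)
            + (N : ℂ) ^ 2 * ((k : ℂ) ^ 3 - (k : ℂ)) / 6) := by
    rw [sum_range_mul_blocks, Finset.sum_comm]
    refine Finset.sum_congr rfl fun r _ => ?_
    have hχ : ∀ q ∈ Finset.range k,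
        χ ((N * q + r : ℕ) + 1) * (((N * q + r : ℕ) : ℂ) + 1)
            * (((N * k : ℕ) : ℂ) - (((N * q + r : ℕ) : ℂ) + 1))
        = χ (r + 1) * (((r : ℂ) + 1) * (((N : ℂ) * k) - ((r : ℂ) + 1))
            + ((N : ℂ) * ((N : ℂ) * k - 2 * ((r : ℂ) + 1))) * (q : ℂ)
            + (-(N : ℂ) ^ 2) * (q : ℂ) ^ 2) := by
      intro q _
      have harg : ((N * q + r : ℕ) : ℤ) + 1 = ((r : ℤ) + 1) + (N : ℤ) * q := by
        push_cast; ring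
      rw [harg, per_mul χ N hper]
      push_cast
      ring
    rw [Finset.sum_congr rfl hχ, ← Finset.mul_sum, sum_quad]
    ring
  rw [key]
  have hA : ((N * k : ℕ) : ℂ) = (N : ℂ) * k := by push_cast; ring
  rw [hA]
  conv_rhs => rw [mul_sub, mul_add, ← mul_assoc, ← mul_assoc, ← mul_assoc]
  have e1 : (N : ℂ) * k * -(1 / (2 * (N : ℂ))) = -((k : ℂ) / 2) := by
    field_simp
  have e3 : ((N : ℂ) * k) ^ 3 / (12 * N) = (N : ℂ) ^ 2 * (k : ℂ) ^ 3 / 12 := by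
    field_simp
  rw [e1, e3]
  simp only [Finset.mul_sum]
  rw [← Finset.sum_add_distrib, ← Finset.sum_sub_distrib, ← Finset.sum_add_distrib]
  refine Finset.sum_congr rfl fun r _ => ?_
  ring
end

section
/- Euler's pentagonal number theorem: for |x| < 1, ∏_{n=1}^{∞} (1 - xⁿ) = ∑_{n=-∞}^{∞} (-1)ⁿ x^{n(3n+1)/2}. -/
/-!
The pentagonal identity holds in any topological ring in which the relevant series and products
converge (`Pentagonal.tprod_one_sub_pow`): with
`A_k = ∑ₙ x^((k+1)n) ∏_{i ≤ n} (1 - x^(k+i+1))`, telescoping gives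
`A_k = 1 - x^(2k+3) - x^(3k+5) A_(k+1)`, and unrolling this recurrence expresses the Euler product
as a partial pentagonal sum plus a remainder. For `‖x‖ < 1` in a complete normed ring all these
hypotheses follow from one estimate: a finite product of factors `1 - x^m` with distinct exponents
has norm at most `exp (1 / (1 - ‖x‖))`, so every series involved is dominated by a geometric one.
-/

open Filter Finset Topology

theorem natAbs_le_pentagonal (k : ℤ) : k.natAbs ≤ pentagonal k := by
  have h := two_mul_natCast_pentagonal k
  rcases le_or_gt 0 k with hk | hk
  · rw [← Int.ofNat_le, Int.natCast_natAbs, abs_of_nonneg hk]; nlinarith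
  · rw [← Int.ofNat_le, Int.natCast_natAbs, abs_of_neg hk]; nlinarith

lemma Finset.norm_prod_one_add_le_exp {ι R : Type*} [NormedCommRing R] [NormOneClass R]
    (t : Finset ι) (f : ι → R) : ‖∏ i ∈ t, (1 + f i)‖ ≤ Real.exp (∑ i ∈ t, ‖f i‖) := by
  have := t.norm_prod_one_add_sub_one_le f
  grw [norm_le_norm_sub_add _ 1, this, norm_one, sub_add_cancel]

@[simp]
lemma norm_neg_one_pow_mul {R : Type*} [SeminormedRing R] [NormOneClass R] (k : ℕ) (a : R) :
    ‖(-1) ^ k * a‖ = ‖a‖ := by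
  rcases neg_one_pow_eq_or R k with h | h <;> simp [h]

namespace Pentagonal

variable {R : Type*} [NormedCommRing R] [NormOneClass R] {x : R}

lemma norm_prod_one_sub_pow_le (hx : ‖x‖ < 1) (k n : ℕ) :
    ‖∏ i ∈ range n, (1 - x ^ (k + i + 1))‖ ≤ Real.exp (1 - ‖x‖)⁻¹ := by
  simp_rw [sub_eq_add_neg]
  grw [norm_prod_one_add_le_exp]
  gcongr
  calc ∑ i ∈ range n, ‖-x ^ (k + i + 1)‖ ≤ ∑ i ∈ range n, ‖x‖ ^ i := by
        refine sum_le_sum fun i _ ↦ ?_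
        rw [norm_neg]
        exact (norm_pow_le _ _).trans (pow_le_pow_of_le_one (norm_nonneg x) hx.le (by omega))
    _ ≤ (1 - ‖x‖)⁻¹ := by
        rw [range_eq_Ico]
        simpa using geom_sum_Ico_le_of_lt_one (m := 0) (norm_nonneg x) hx

lemma norm_pow_mul_prod_one_sub_pow_le (hx : ‖x‖ < 1) (k n : ℕ) :
    ‖x ^ ((k + 1) * n) * ∏ i ∈ range (n + 1), (1 - x ^ (k + i + 1))‖
      ≤ Real.exp (1 - ‖x‖)⁻¹ * ‖x‖ ^ n := by
  rw [mul_comm]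
  grw [norm_mul_le, norm_prod_one_sub_pow_le hx, norm_pow_le]
  exact mul_le_mul_of_nonneg_left
    (pow_le_pow_of_le_one (norm_nonneg x) hx.le (Nat.le_mul_of_pos_left n k.succ_pos))
    (Real.exp_pos _).le

lemma norm_tsum_pow_mul_prod_one_sub_pow_le (hx : ‖x‖ < 1) (k : ℕ) :
    ‖∑' n, x ^ ((k + 1) * n) * ∏ i ∈ range (n + 1), (1 - x ^ (k + i + 1))‖
      ≤ Real.exp (1 - ‖x‖)⁻¹ * (1 - ‖x‖)⁻¹ :=
  tsum_of_norm_bounded ((hasSum_geometric_of_lt_one (norm_nonneg x) hx).mul_left _)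
    (norm_pow_mul_prod_one_sub_pow_le hx k)

/-- `(-1)^(k+1) x^((k+1)(3k+4)/2) A_k` is the error of the `k`-th partial pentagonal sum. -/
lemma tendsto_remainder_nhds_zero (hx : ‖x‖ < 1) :
    Tendsto (fun k ↦ (-1) ^ (k + 1) * x ^ ((k + 1) * (3 * k + 4) / 2) *
      ∑' n, x ^ ((k + 1) * n) * ∏ i ∈ range (n + 1), (1 - x ^ (k + i + 1))) atTop (𝓝 0) := by
  have hgeom : Tendsto (fun k ↦ ‖x‖ ^ k * (Real.exp (1 - ‖x‖)⁻¹ * (1 - ‖x‖)⁻¹)) atTop (𝓝 0) := by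
    simpa using (tendsto_pow_atTop_nhds_zero_of_lt_one (norm_nonneg x) hx).mul_const
      (Real.exp (1 - ‖x‖)⁻¹ * (1 - ‖x‖)⁻¹)
  refine squeeze_zero_norm (fun k ↦ ?_) hgeom
  have hexp : k ≤ (k + 1) * (3 * k + 4) / 2 := by
    rw [Nat.le_div_iff_mul_le two_pos]
    nlinarith
  rw [mul_assoc, norm_neg_one_pow_mul]
  grw [norm_mul_le, norm_pow_le, norm_tsum_pow_mul_prod_one_sub_pow_le hx k]
  exact mul_le_mul_of_nonneg_right (pow_le_pow_of_le_one (norm_nonneg x) hx.le hexp)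
    (by positivity)

variable [CompleteSpace R]

lemma summable_neg_one_pow_mul_pow_pentagonal (hx : ‖x‖ < 1) {g : ℕ → ℤ}
    (hg : ∀ k, k ≤ (g k).natAbs) : Summable fun k ↦ (-1) ^ k * x ^ pentagonal (g k) := by
  refine .of_norm_bounded (summable_geometric_of_lt_one (norm_nonneg x) hx) fun k ↦ ?_
  rw [norm_neg_one_pow_mul]
  exact (norm_pow_le _ _).trans <| pow_le_pow_of_le_one (norm_nonneg x) hx.le <|
    (hg k).trans (natAbs_le_pentagonal _)

lemma summable_pow_mul_prod_one_sub_pow (hx : ‖x‖ < 1) (k : ℕ) :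
    Summable fun n ↦ x ^ ((k + 1) * n) * ∏ i ∈ range (n + 1), (1 - x ^ (k + i + 1)) :=
  .of_norm_bounded ((summable_geometric_of_lt_one (norm_nonneg x) hx).mul_left _)
    (norm_pow_mul_prod_one_sub_pow_le hx k)

lemma multipliable_one_sub_pow (hx : ‖x‖ < 1) (k : ℕ) :
    Multipliable fun n ↦ 1 - x ^ (n + k + 1) := by
  simp_rw [sub_eq_add_neg]
  refine multipliable_one_add_of_summable <|
    .of_nonneg_of_le (fun _ ↦ norm_nonneg _) (fun n ↦ ?_) <|
      summable_geometric_of_lt_one (norm_nonneg x) hx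
  rw [norm_neg]
  exact (norm_pow_le _ _).trans (pow_le_pow_of_le_one (norm_nonneg x) hx.le (by omega))

theorem tprod_one_sub_pow_of_norm_lt_one (hx : ‖x‖ < 1) :
    ∏' n, (1 - x ^ (n + 1)) =
      ∑' k : ℕ, (-1) ^ k * (x ^ pentagonal (-k) - x ^ pentagonal (k + 1)) := by
  refine tprod_one_sub_pow (tendsto_pow_atTop_nhds_zero_of_norm_lt_one hx)
    (summable_pow_mul_prod_one_sub_pow hx) (multipliable_one_sub_pow hx) ?_
    (tendsto_remainder_nhds_zero hx)
  simp_rw [mul_sub]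
  exact (summable_neg_one_pow_mul_pow_pentagonal hx (by simp)).sub
    (summable_neg_one_pow_mul_pow_pentagonal hx (by omega))

section Field

variable {K : Type*}

lemma zpow_mul_three_mul_add_one_div_two [DivisionRing K] (x : K) (n : ℤ) :
    x ^ (n * (3 * n + 1) / 2) = x ^ pentagonal (-n) := by
  rw [← zpow_natCast, natCast_pentagonal]
  ring_nf

theorem tsum_int_pentagonal_eq_tsum_nat [NormedField K] [CompleteSpace K] {x : K} (hx : ‖x‖ < 1) :
    ∑' n : ℤ, (-1 : K) ^ n * x ^ (n * (3 * n + 1) / 2) =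
      ∑' k : ℕ, (-1) ^ k * (x ^ pentagonal (-k) - x ^ pentagonal (k + 1)) := by
  have hsign (k : ℕ) : (-1 : K) ^ (-((k : ℤ) + 1)) = -(-1) ^ k := by
    rw [zpow_neg, ← Nat.cast_succ, zpow_natCast, ← inv_pow, inv_neg, inv_one, pow_succ, mul_neg_one]
  have hnonneg := summable_neg_one_pow_mul_pow_pentagonal hx (g := (-·)) (by simp)
  have hneg := summable_neg_one_pow_mul_pow_pentagonal hx (g := (· + 1)) (by omega)
  simp_rw [zpow_mul_three_mul_add_one_div_two]
  rw [tsum_of_nat_of_neg_add_one (by simpa only [zpow_natCast] using hnonneg)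
    (by simpa only [hsign, neg_neg, neg_mul] using hneg.neg)]
  simp only [zpow_natCast, hsign, neg_neg, neg_mul, tsum_neg, mul_sub, ← sub_eq_add_neg]
  exact (hnonneg.tsum_sub hneg).symm

end Field

end Pentagonal

/-- Euler's pentagonal number theorem: for `|x| < 1`,
`∏_{n=1}^{∞} (1 - xⁿ) = ∑_{n∈ℤ} (-1)ⁿ x^{n(3n+1)/2}`. -/
theorem euler_pentagonal (x : ℂ) (hx : ‖x‖ < 1) :
    ∏' n : ℕ, (1 - x ^ (n + 1))
      = ∑' n : ℤ, (-1 : ℂ) ^ n * x ^ (n * (3 * n + 1) / 2) := by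
  rw [Pentagonal.tprod_one_sub_pow_of_norm_lt_one hx, Pentagonal.tsum_int_pentagonal_eq_tsum_nat hx]
end

section
/- Let α: ℤ → ℂ satisfy α(-m) = -α(m) and the cocycle relation (m-n)α(m+n) - (2n+m)α(m) + (n+2m)α(n) = 0 for all m, n ∈ ℤ. Then there exist a, b ∈ ℂ with α(m) = a·m + b·m³ for all m ∈ ℤ. -/
/-- Any odd solution of the Virasoro cocycle relation
`(m-n)α(m+n) - (2n+m)α(m) + (n+2m)α(n) = 0` is of the form `α(m) = a·m + b·m³`. -/
theorem virasoro_cocycle_classification (α : ℤ → ℂ)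
    (hodd : ∀ m : ℤ, α (-m) = -α m)
    (hcoc : ∀ m n : ℤ, ((m : ℂ) - n) * α (m + n) - (2 * n + m) * α m
        + ((n : ℂ) + 2 * m) * α n = 0) :
    ∃ a b : ℂ, ∀ m : ℤ, α m = a * m + b * (m : ℂ) ^ 3 := by
  set a : ℂ := (8 * α 1 - α 2) / 6 with ha
  set b : ℂ := (α 2 - 2 * α 1) / 6 with hb
  have h0 : α 0 = 0 := by
    have h := hodd 0
    rw [neg_zero] at h
    linear_combination h / 2
  have h1 : α 1 = a * 1 + b * (1 : ℂ) ^ 3 := by rw [ha, hb]; ring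
  have h2 : α 2 = a * 2 + b * (2 : ℂ) ^ 3 := by rw [ha, hb]; ring
  have main : ∀ k : ℕ, α (k : ℤ) = a * (k : ℂ) + b * (k : ℂ) ^ 3 := by
    intro k
    induction k using Nat.strong_induction_on with
    | _ k IH =>
      match k with
      | 0 => simpa using h0
      | 1 => simpa using h1
      | 2 => simpa using h2
      | (k + 3) =>
        have IH2 := IH (k + 2) (by omega)
        have hkey := hcoc ((k : ℤ) + 2) 1
        have harg : ((k : ℤ) + 2) + 1 = ((k : ℕ) + 3 : ℕ) := by push_cast; ring
        rw [harg] at hkey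
        have harg2 : ((k : ℤ) + 2) = ((k : ℕ) + 2 : ℕ) := by push_cast; ring
        rw [harg2] at hkey
        push_cast at hkey IH2 ⊢
        have hk : (k : ℂ) + 1 ≠ 0 := Nat.cast_add_one_ne_zero k
        have hmul : ((k : ℂ) + 1) * α ((k : ℤ) + 3) =
            ((k : ℂ) + 1) * (a * ((k : ℂ) + 3) + b * ((k : ℂ) + 3) ^ 3) := by
          linear_combination hkey + ((k : ℂ) + 4) * IH2 - (2 * (k : ℂ) + 5) * h1
        exact mul_left_cancel₀ hk hmul
  refine ⟨a, b, fun m => ?_⟩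
  obtain ⟨k, rfl | rfl⟩ := Int.eq_nat_or_neg m
  · exact main k
  · have := main k
    rw [hodd k, this]
    push_cast
    ring
end
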